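/- arXiv:1407.5499 — 2 statements merged into one kernel-verified Lean document; each statement's English description precedes it below -/
import Mathlib

section
/- Proclus's property holds in the Euclidean plane: a line that cuts one of two distinct parallel lines must cut the other. Precisely: if l₁ and l₂ are distinct parallel affine lines in a 2-dimensional real affine space, and m is a line that meets l₁ in a point but is not equal to l₁ (equivalently, m is not parallel to l₁), then m meets l₂ in a point. -/
/-- Proclus's property: in a 2-dimensional real affine space, a line that cuts
one of two distinct parallel lines must cut the other. -/
theorem proclus_property
    {V : Type*} [AddCommGroup V] [Module ℝ V]
    {P : Type*} [AddTorsor V P]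
    (hdim : Module.finrank ℝ V = 2)
    (l₁ l₂ m : AffineSubspace ℝ P)
    (hl₁ : Module.finrank ℝ l₁.direction = 1)
    (hl₂ : Module.finrank ℝ l₂.direction = 1)
    (hm : Module.finrank ℝ m.direction = 1)
    (hpar : AffineSubspace.Parallel l₁ l₂) (hne : l₁ ≠ l₂)
    (x : P) (hxm : x ∈ m) (hxl₁ : x ∈ l₁) (hml₁ : m ≠ l₁) :
    ∃ y : P, y ∈ m ∧ y ∈ l₂ := by
  haveI : FiniteDimensional ℝ V := FiniteDimensional.of_finrank_eq_succ hdim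
  have hdir : m.direction ≠ l₁.direction := by
    intro h
    exact hml₁ ((AffineSubspace.eq_iff_direction_eq_of_mem hxm hxl₁).2 h)
  have hlt : m.direction < m.direction ⊔ l₁.direction := by
    refine lt_of_le_of_ne le_sup_left ?_
    intro h
    have hle : l₁.direction ≤ m.direction := h ▸ le_sup_right
    exact hdir (Submodule.eq_of_le_of_finrank_eq hle (hl₁.trans hm.symm)).symm
  have htop : m.direction ⊔ l₁.direction = ⊤ := by
    apply Submodule.eq_top_of_finrank_eq
    have h1 : 1 < Module.finrank ℝ ↥(m.direction ⊔ l₁.direction) :=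
      hm ▸ Submodule.finrank_lt_finrank_of_lt hlt
    have h2 : Module.finrank ℝ ↥(m.direction ⊔ l₁.direction) ≤ 2 :=
      hdim ▸ Submodule.finrank_le _
    omega
  obtain ⟨p, hp⟩ : (l₂ : Set P).Nonempty := by
    obtain ⟨v, rfl⟩ := hpar
    exact ⟨v +ᵥ x, ⟨x, hxl₁, rfl⟩⟩
  have hd12 : l₁.direction = l₂.direction := hpar.direction_eq
  have hmem : p -ᵥ x ∈ m.direction ⊔ l₁.direction := htop ▸ Submodule.mem_top
  obtain ⟨u, hu, w, hw, huw⟩ := Submodule.mem_sup.1 hmem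
  refine ⟨u +ᵥ x, m.vadd_mem_of_mem_direction hu hxm, ?_⟩
  have h1 : ((u +ᵥ x) -ᵥ p) ∈ l₂.direction := by
    rw [← hd12]
    have h2 : ((u +ᵥ x) -ᵥ p) = -w := by
      rw [vadd_vsub_assoc, ← neg_vsub_eq_vsub_rev, ← huw]; abel
    rw [h2]
    exact neg_mem hw
  have h3 := l₂.vadd_mem_of_mem_direction h1 hp
  rwa [vsub_vadd] at h3
end

section
/- In the Euclidean plane, a line perpendicular to the bisector of an acute angle at a point strictly inside the angle must meet both arms of the angle. Precisely: let O be a point, let u and v be unit vectors with 0 < ∠(u,v) < π/2, let the two arms be the rays {O + t·u : t ≥ 0} and {O + t·v : t ≥ 0}, let b = (u + v)/‖u + v‖ be the direction of the angle bisector, let P = O + s·b for some s > 0 be a point inside the angle on the bisector, and let m be the line through P perpendicular to b. Then m meets both arms: there exist t₁ ≥ 0 and t₂ ≥ 0 with O + t₁·u ∈ m and O + t₂·v ∈ m. -/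
open InnerProductGeometry Module
open scoped RealInnerProductSpace

/-!
The line through `P` perpendicular to `b` is the level set `{x | ⟪x - O, b⟫ = ⟪P - O, b⟫}`, because in
the plane the vectors orthogonal to `b ≠ 0` are exactly the multiples of `d`. The ray `O + t • u`
reaches that level at `t = ⟪P - O, b⟫ / ⟪u, b⟫ ≥ 0` as soon as `⟪u, b⟫ > 0`. For the bisector `b`,
both `⟪u, b⟫` and `⟪v, b⟫` are positive multiples of `‖u‖² + ⟪u, v⟫`, resp. `‖v‖² + ⟪u, v⟫`, which
are positive since the angle is acute.
-/

section

variable {V : Type*} [NormedAddCommGroup V] [InnerProductSpace ℝ V]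

theorem InnerProductGeometry.inner_pos_of_angle_lt_pi_div_two {x y : V}
    (h : angle x y < Real.pi / 2) : 0 < ⟪x, y⟫ := by
  rw [angle, Real.arccos_lt_pi_div_two, div_pos_iff] at h
  rcases h with ⟨hxy, -⟩ | ⟨-, hneg⟩
  · exact hxy
  · exact absurd hneg (not_lt.2 (by positivity))

theorem InnerProductGeometry.inner_add_right_pos_of_angle_lt_pi_div_two {x y : V}
    (h : angle x y < Real.pi / 2) : 0 < ⟪x, x + y⟫ := by
  rw [inner_add_right, real_inner_self_eq_norm_sq]
  exact add_pos_of_nonneg_of_pos (sq_nonneg _) (inner_pos_of_angle_lt_pi_div_two h)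

theorem real_inner_inv_norm_smul_pos {x y : V} (h : 0 < ⟪x, y⟫) :
    0 < ⟪x, ‖y‖⁻¹ • y⟫ := by
  have hy : y ≠ 0 := by
    rintro rfl
    simp at h
  rw [real_inner_smul_right]
  exact mul_pos (inv_pos.2 (norm_pos_iff.2 hy)) h

theorem exists_ray_mem_line_of_inner_pos (hdim : finrank ℝ V = 2) {O P u b d : V}
    (hd : d ≠ 0) (hdb : ⟪d, b⟫ = 0) (hub : 0 < ⟪u, b⟫) (hP : 0 ≤ ⟪P - O, b⟫) :
    ∃ t r : ℝ, 0 ≤ t ∧ O + t • u = P + r • d := by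
  have : Fact (finrank ℝ V = 2) := ⟨hdim⟩
  have hb : b ≠ 0 := by
    rintro rfl
    simp at hub
  set t := ⟪P - O, b⟫ / ⟪u, b⟫
  have hperp : ⟪b, O + t • u - P⟫ = 0 := by
    have : O + t • u - P = t • u - (P - O) := by abel
    rw [this, real_inner_comm, inner_sub_left, real_inner_smul_left, div_mul_cancel₀ _ hub.ne',
      sub_self]
  obtain ⟨r, hr⟩ := Submodule.mem_span_singleton.1 <|
    Submodule.mem_span_singleton_of_inner_eq_zero_of_inner_eq_zero hb hd hperp
      (by rwa [real_inner_comm])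
  refine ⟨t, r, div_nonneg hP hub.le, ?_⟩
  rw [hr, add_sub_cancel]

end

open InnerProductGeometry in
theorem perp_to_bisector_meets_both_arms_general
    {V : Type*} [NormedAddCommGroup V] [InnerProductSpace ℝ V]
    (hdim : Module.finrank ℝ V = 2)
    (O u v : V)
    (hang₁ : InnerProductGeometry.angle u v < Real.pi / 2)
    (b : V) (hb : b = ‖u + v‖⁻¹ • (u + v))
    (s : ℝ) (hs : 0 < s)
    (P : V) (hP : P = O + s • b)
    (d : V) (hd : d ≠ 0) (hdb : (inner ℝ d b : ℝ) = 0) :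
    (∃ t₁ r₁ : ℝ, 0 ≤ t₁ ∧ O + t₁ • u = P + r₁ • d) ∧
    (∃ t₂ r₂ : ℝ, 0 ≤ t₂ ∧ O + t₂ • v = P + r₂ • d) := by
  have hPO : 0 ≤ ⟪P - O, b⟫ := by
    rw [hP, add_sub_cancel_left, real_inner_smul_left, real_inner_self_eq_norm_sq]
    positivity
  have hub : 0 < ⟪u, b⟫ := hb ▸
    real_inner_inv_norm_smul_pos (inner_add_right_pos_of_angle_lt_pi_div_two hang₁)
  have hvb : 0 < ⟪v, b⟫ := by
    rw [hb, add_comm]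
    exact real_inner_inv_norm_smul_pos
      (inner_add_right_pos_of_angle_lt_pi_div_two (angle_comm u v ▸ hang₁))
  exact ⟨exists_ray_mem_line_of_inner_pos hdim hd hdb hub hPO,
    exists_ray_mem_line_of_inner_pos hdim hd hdb hvb hPO⟩

/-- In the Euclidean plane, a line perpendicular to the bisector of an acute
angle at a point strictly inside the angle must meet both arms of the angle. -/
theorem perp_to_bisector_meets_both_arms
    {V : Type*} [NormedAddCommGroup V] [InnerProductSpace ℝ V]
    (hdim : Module.finrank ℝ V = 2)
    (O u v : V) (hu : ‖u‖ = 1) (hv : ‖v‖ = 1)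
    (hang₀ : 0 < InnerProductGeometry.angle u v)
    (hang₁ : InnerProductGeometry.angle u v < Real.pi / 2)
    (b : V) (hb : b = ‖u + v‖⁻¹ • (u + v))
    (s : ℝ) (hs : 0 < s)
    (P : V) (hP : P = O + s • b)
    (d : V) (hd : d ≠ 0) (hdb : (inner ℝ d b : ℝ) = 0) :
    (∃ t₁ r₁ : ℝ, 0 ≤ t₁ ∧ O + t₁ • u = P + r₁ • d) ∧
    (∃ t₂ r₂ : ℝ, 0 ≤ t₂ ∧ O + t₂ • v = P + r₂ • d) :=
  perp_to_bisector_meets_both_arms_general hdim O u v hang₁ b hb s hs P hP d hd hdb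
end
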